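/- Let Γ be a finite simple graph that is a tree with n vertices (n ≥ 1). Then the Bestvina–Brady group N_Γ (the kernel of the homomorphism from the right-angled Artin group G_Γ to ℤ sending every vertex generator to 1) is isomorphic to the free group F_{n-1} on n-1 generators. -/

import Mathlib

/-- The defining relators of the right-angled Artin group of a graph `Γ`:
one commutator for each edge. -/
def raagRels {V : Type} (Γ : SimpleGraph V) : Set (FreeGroup V) :=
  {r | ∃ v w : V, Γ.Adj v w ∧
    r = FreeGroup.of v * FreeGroup.of w * (FreeGroup.of v)⁻¹ * (FreeGroup.of w)⁻¹}

/-- The right-angled Artin group of a finite simple graph. -/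
def raag {V : Type} (Γ : SimpleGraph V) : Type := PresentedGroup (raagRels Γ)

instance {V : Type} (Γ : SimpleGraph V) : Group (raag Γ) :=
  inferInstanceAs (Group (PresentedGroup (raagRels Γ)))

/-- The length homomorphism `ν : G_Γ → ℤ` sending each vertex generator to `1`. -/
def raagNu {V : Type} (Γ : SimpleGraph V) : raag Γ →* Multiplicative ℤ :=
  PresentedGroup.toGroup (f := fun _ : V => Multiplicative.ofAdd (1 : ℤ))
    (by rintro r ⟨v, w, -, rfl⟩; simp only [map_mul, map_inv, FreeGroup.lift_apply_of]; group)

/-- The Bestvina–Brady group of a graph: the kernel of the length homomorphism. -/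
def BB {V : Type} (Γ : SimpleGraph V) : Subgroup (raag Γ) := (raagNu Γ).ker

set_option linter.unusedSectionVars false
set_option linter.unusedVariables false

namespace BBFree

open SimpleGraph Walk

variable {V : Type} [DecidableEq V] {Γ : SimpleGraph V}

/-! ### Tree combinatorics -/

/-- The unique path from `r` to `v` in a tree. -/
noncomputable def pathTo (ht : Γ.IsTree) (r v : V) : Γ.Walk r v :=
  (ht.existsUnique_path r v).exists.choose

lemma pathTo_isPath (ht : Γ.IsTree) (r v : V) : (pathTo ht r v).IsPath :=
  (ht.existsUnique_path r v).exists.choose_spec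

lemma path_unique (ht : Γ.IsTree) {r v : V} (p : Γ.Walk r v) (hp : p.IsPath) :
    p = pathTo ht r v :=
  (ht.existsUnique_path r v).unique hp (pathTo_isPath ht r v)

lemma pathTo_self (ht : Γ.IsTree) (r : V) : pathTo ht r r = Walk.nil :=
  (path_unique ht Walk.nil (IsPath.nil)).symm

lemma exists_parent (ht : Γ.IsTree) {r v : V} (hv : v ≠ r) :
    ∃ (u : V) (h : Γ.Adj u v), pathTo ht r v = (pathTo ht r u).concat h := by
  obtain ⟨x, h, q, hq⟩ := Walk.exists_eq_cons_of_ne hv (pathTo ht r v).reverse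
  refine ⟨x, h.symm, ?_⟩
  have hrev : pathTo ht r v = q.reverse.concat h.symm := by
    have := congrArg Walk.reverse hq
    rwa [Walk.reverse_reverse, Walk.reverse_cons, ← Walk.concat_eq_append] at this
  have hqpath : q.reverse.IsPath := by
    have hp := pathTo_isPath ht r v
    rw [hrev, Walk.concat_eq_append] at hp
    exact hp.of_append_left
  rw [hrev, path_unique ht q.reverse hqpath]

/-- The parent of a vertex in the tree rooted at `r`. -/
noncomputable def pa (ht : Γ.IsTree) (r v : V) : V :=
  if hv : v = r then r else (exists_parent ht hv).choose

lemma pa_spec (ht : Γ.IsTree) {r v : V} (hv : v ≠ r) :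
    ∃ h : Γ.Adj (pa ht r v) v, pathTo ht r v = (pathTo ht r (pa ht r v)).concat h := by
  rw [pa, dif_neg hv]
  exact (exists_parent ht hv).choose_spec

lemma pa_adj (ht : Γ.IsTree) {r v : V} (hv : v ≠ r) : Γ.Adj (pa ht r v) v :=
  (pa_spec ht hv).choose

/-- Depth of a vertex. -/
noncomputable def dep (ht : Γ.IsTree) (r v : V) : ℕ := (pathTo ht r v).length

lemma dep_pa_lt (ht : Γ.IsTree) {r v : V} (hv : v ≠ r) :
    dep ht r (pa ht r v) < dep ht r v := by
  obtain ⟨h, hc⟩ := pa_spec ht hv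
  simp only [dep, hc, Walk.length_concat]
  omega

/-- If the path to `v` is obtained from the path to `u` by appending an edge, then `u`
is the parent of `v`. -/
lemma eq_pa_of_concat (ht : Γ.IsTree) {r u v : V} (h : Γ.Adj u v)
    (hc : pathTo ht r v = (pathTo ht r u).concat h) : ∃ hv : v ≠ r, pa ht r v = u := by
  have hv : v ≠ r := by
    intro hvr
    subst hvr
    have := congrArg Walk.length hc
    rw [pathTo_self, Walk.length_concat] at this
    simp at this
  refine ⟨hv, ?_⟩
  obtain ⟨h', hc'⟩ := pa_spec ht hv
  rw [hc] at hc'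
  have := congrArg Walk.reverse hc'
  rw [Walk.reverse_concat, Walk.reverse_concat] at this
  have h2 := congrArg (fun w => w.getVert 1) this
  simpa [Walk.getVert_cons_succ, Walk.getVert_zero] using h2.symm

/-- For every edge of the tree, one endpoint is the parent of the other. -/
lemma edge_cases (ht : Γ.IsTree) (r : V) {u v : V} (h : Γ.Adj u v) :
    (∃ hv : v ≠ r, pa ht r v = u) ∨ (∃ hu : u ≠ r, pa ht r u = v) := by
  by_cases hmem : v ∈ (pathTo ht r u).support
  · right
    have h1 : (pathTo ht r u).takeUntil v hmem = pathTo ht r v :=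
      path_unique ht _ ((pathTo_isPath ht r u).takeUntil hmem)
    have h2 : (pathTo ht r u).dropUntil v hmem = Walk.cons h.symm Walk.nil := by
      refine (ht.existsUnique_path v u).unique ((pathTo_isPath ht r u).dropUntil hmem) ?_
      rw [Walk.cons_isPath_iff]
      exact ⟨IsPath.nil, by simp [h.ne']⟩
    have h3 : pathTo ht r u = (pathTo ht r v).concat h.symm := by
      conv_lhs => rw [← Walk.take_spec (pathTo ht r u) hmem]
      rw [h1, h2, Walk.concat_eq_append]
    exact eq_pa_of_concat ht h.symm h3
  · left
    have hpath : ((pathTo ht r u).concat h).IsPath := by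
      rw [← Walk.isPath_reverse_iff, Walk.reverse_concat, Walk.cons_isPath_iff]
      refine ⟨(pathTo_isPath ht r u).reverse, ?_⟩
      rw [Walk.support_reverse]
      simpa using hmem
    exact eq_pa_of_concat ht h ((path_unique ht _ hpath).symm)

/-! ### Words in the free group -/

section Words
variable (ht : Γ.IsTree) (r : V)

/-- generator of the free group on non-root vertices -/
noncomputable abbrev gen {r : V} (v : V) (hv : v ≠ r) : FreeGroup {w : V // w ≠ r} :=
  FreeGroup.of ⟨v, hv⟩

/-- the word along the path from the root down to `v` -/
noncomputable def Cw (v : V) : FreeGroup {w : V // w ≠ r} :=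
  if hv : v = r then 1 else Cw (pa ht r v) * gen v hv
  termination_by dep ht r v
  decreasing_by exact dep_pa_lt ht hv

/-- the reversed word along the path from the root down to `v` -/
noncomputable def Aw (v : V) : FreeGroup {w : V // w ≠ r} :=
  if hv : v = r then 1 else gen v hv * Aw (pa ht r v)
  termination_by dep ht r v
  decreasing_by exact dep_pa_lt ht hv

lemma Cw_root : Cw ht r r = 1 := by rw [Cw, dif_pos rfl]
lemma Aw_root : Aw ht r r = 1 := by rw [Aw, dif_pos rfl]
lemma Cw_ne {v : V} (hv : v ≠ r) : Cw ht r v = Cw ht r (pa ht r v) * gen v hv := by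
  rw [Cw, dif_neg hv]
lemma Aw_ne {v : V} (hv : v ≠ r) : Aw ht r v = gen v hv * Aw ht r (pa ht r v) := by
  rw [Aw, dif_neg hv]

/-- the endomorphism α of the free group -/
noncomputable def aEnd : FreeGroup {w : V // w ≠ r} →* FreeGroup {w : V // w ≠ r} :=
  FreeGroup.lift fun v' => (Aw ht r (pa ht r v'.1))⁻¹ * FreeGroup.of v' * Aw ht r (pa ht r v'.1)

/-- the endomorphism β, inverse to α -/
noncomputable def bEnd : FreeGroup {w : V // w ≠ r} →* FreeGroup {w : V // w ≠ r} :=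
  FreeGroup.lift fun v' => Cw ht r (pa ht r v'.1) * FreeGroup.of v' * (Cw ht r (pa ht r v'.1))⁻¹

lemma aEnd_gen {v : V} (hv : v ≠ r) :
    aEnd ht r (gen v hv) = (Aw ht r (pa ht r v))⁻¹ * gen v hv * Aw ht r (pa ht r v) :=
  FreeGroup.lift_apply_of
lemma bEnd_gen {v : V} (hv : v ≠ r) :
    bEnd ht r (gen v hv) = Cw ht r (pa ht r v) * gen v hv * (Cw ht r (pa ht r v))⁻¹ :=
  FreeGroup.lift_apply_of

lemma aEnd_Cw (v : V) : aEnd ht r (Cw ht r v) = Aw ht r v := by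
  by_cases hv : v = r
  · subst hv; rw [Cw_root, Aw_root, map_one]
  · rw [Cw_ne ht r hv, Aw_ne ht r hv, map_mul, aEnd_Cw (pa ht r v), aEnd_gen ht r hv]
    group
  termination_by dep ht r v
  decreasing_by exact dep_pa_lt ht hv

lemma bEnd_Aw (v : V) : bEnd ht r (Aw ht r v) = Cw ht r v := by
  by_cases hv : v = r
  · subst hv; rw [Cw_root, Aw_root, map_one]
  · rw [Cw_ne ht r hv, Aw_ne ht r hv, map_mul, bEnd_Aw (pa ht r v), bEnd_gen ht r hv]
    group
  termination_by dep ht r v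
  decreasing_by exact dep_pa_lt ht hv

lemma bEnd_aEnd : (bEnd ht r).comp (aEnd ht r) = MonoidHom.id _ := by
  refine FreeGroup.ext_hom _ _ fun v' => ?_
  obtain ⟨v, hv⟩ := v'
  show bEnd ht r (aEnd ht r (gen v hv)) = gen v hv
  rw [aEnd_gen ht r hv, map_mul, map_mul, map_inv, bEnd_Aw, bEnd_gen ht r hv]
  group

lemma aEnd_bEnd : (aEnd ht r).comp (bEnd ht r) = MonoidHom.id _ := by
  refine FreeGroup.ext_hom _ _ fun v' => ?_
  obtain ⟨v, hv⟩ := v'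
  show aEnd ht r (bEnd ht r (gen v hv)) = gen v hv
  rw [bEnd_gen ht r hv, map_mul, map_mul, map_inv, aEnd_Cw, aEnd_gen ht r hv]
  group

lemma bEnd_aEnd_apply (g : FreeGroup {w : V // w ≠ r}) : bEnd ht r (aEnd ht r g) = g :=
  DFunLike.congr_fun (bEnd_aEnd ht r) g

lemma aEnd_bEnd_apply (g : FreeGroup {w : V // w ≠ r}) : aEnd ht r (bEnd ht r g) = g :=
  DFunLike.congr_fun (aEnd_bEnd ht r) g

/-- the automorphism α -/
noncomputable def alpha : MulAut (FreeGroup {w : V // w ≠ r}) :=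
  MonoidHom.toMulEquiv (aEnd ht r) (bEnd ht r) (bEnd_aEnd ht r) (aEnd_bEnd ht r)

/-- the action of ℤ -/
noncomputable def phi : Multiplicative ℤ →* MulAut (FreeGroup {w : V // w ≠ r}) :=
  zpowersHom _ (alpha ht r)

/-- the distinguished generator of `Multiplicative ℤ` -/
abbrev tt : Multiplicative ℤ := Multiplicative.ofAdd 1

lemma phi_t (g : FreeGroup {w : V // w ≠ r}) : phi ht r tt g = aEnd ht r g := by
  show (alpha ht r ^ ((1:ℤ))) g = _
  rw [zpow_one]; rfl

lemma phi_t_inv (g : FreeGroup {w : V // w ≠ r}) : phi ht r tt⁻¹ g = bEnd ht r g := by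
  have : phi ht r tt⁻¹ = (alpha ht r)⁻¹ := by
    rw [map_inv]
    congr 1
  rw [this]; rfl

/-! ### The semidirect product and the isomorphism -/

/-- the semidirect product -/
noncomputable abbrev Gp : Type :=
  SemidirectProduct (FreeGroup {w : V // w ≠ r}) (Multiplicative ℤ) (phi ht r)

open SemidirectProduct

lemma mk_mul (a b : FreeGroup {w : V // w ≠ r}) (g₁ g₂ : Multiplicative ℤ) :
    (⟨a, g₁⟩ * ⟨b, g₂⟩ : Gp ht r) = ⟨a * phi ht r g₁ b, g₁ * g₂⟩ := rfl

lemma mk_inv (a : FreeGroup {w : V // w ≠ r}) (g : Multiplicative ℤ) :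
    (⟨a, g⟩ : Gp ht r)⁻¹ = ⟨phi ht r g⁻¹ a⁻¹, g⁻¹⟩ := rfl

/-- the image of a vertex generator in the semidirect product -/
noncomputable def ThetaF (v : V) : Gp ht r := ⟨Cw ht r v, tt⟩

lemma thetaF_comm {u v : V} (h : Γ.Adj u v) :
    ThetaF ht r u * ThetaF ht r v = ThetaF ht r v * ThetaF ht r u := by
  have key : ∀ w : V, ∀ hw : w ≠ r,
      ThetaF ht r (pa ht r w) * ThetaF ht r w = ThetaF ht r w * ThetaF ht r (pa ht r w) := by
    intro w hw
    simp only [ThetaF, mk_mul, phi_t, aEnd_Cw]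
    congr 1
    rw [Cw_ne ht r hw, Aw_ne ht r hw]
    group
  rcases edge_cases ht r h with ⟨hv, rfl⟩ | ⟨hu, rfl⟩
  · exact key v hv
  · exact (key u hu).symm

/-- the map `raag Γ → Gp` -/
noncomputable def Theta : raag Γ →* Gp ht r :=
  PresentedGroup.toGroup (f := ThetaF ht r) (by
    rintro rel ⟨u, v, huv, rfl⟩
    simp only [map_mul, map_inv, FreeGroup.lift_apply_of]
    rw [mul_assoc, mul_assoc, ← mul_inv_rev, ← thetaF_comm ht r huv, mul_inv_rev]
    group)

lemma Theta_of (v : V) : Theta ht r (PresentedGroup.of v) = ThetaF ht r v :=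
  PresentedGroup.toGroup.of _

/-- the vertex generator in the RAAG -/
noncomputable def og (v : V) : raag Γ := PresentedGroup.of v

lemma og_comm {u v : V} (h : Γ.Adj u v) :
    og (Γ := Γ) u * og v = og v * og u := by
  have h1 : (FreeGroup.of u * FreeGroup.of v * (FreeGroup.of u)⁻¹ * (FreeGroup.of v)⁻¹ :
      FreeGroup V) ∈ raagRels Γ := ⟨u, v, h, rfl⟩
  have h2 : (QuotientGroup.mk (FreeGroup.of u * FreeGroup.of v * (FreeGroup.of u)⁻¹ *
      (FreeGroup.of v)⁻¹) : PresentedGroup (raagRels Γ)) = 1 :=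
    (QuotientGroup.eq_one_iff _).2 (Subgroup.subset_normalClosure h1)
  have h3 : og (Γ := Γ) u * og v * (og u)⁻¹ * (og v)⁻¹ = 1 := h2
  have := commutatorElement_eq_one_iff_commute.1 h3
  exact this

/-- the map `FreeGroup V' → raag Γ` -/
noncomputable def fOne : FreeGroup {w : V // w ≠ r} →* raag Γ :=
  FreeGroup.lift fun v' => og r * (og (pa ht r v'.1))⁻¹ * og v'.1 * (og (Γ := Γ) r)⁻¹

lemma fOne_gen {v : V} (hv : v ≠ r) :
    fOne ht r (gen v hv) = og r * (og (pa ht r v))⁻¹ * og v * (og (Γ := Γ) r)⁻¹ :=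
  FreeGroup.lift_apply_of

lemma fOne_Cw (v : V) : fOne ht r (Cw ht r v) = og v * (og (Γ := Γ) r)⁻¹ := by
  by_cases hv : v = r
  · subst hv; rw [Cw_root, map_one]; group
  · rw [Cw_ne ht r hv, map_mul, fOne_Cw (pa ht r v), fOne_gen ht r hv]
    group
  termination_by dep ht r v
  decreasing_by exact dep_pa_lt ht hv

lemma fOne_Aw (v : V) : fOne ht r (Aw ht r v) = og r * og v * (og (Γ := Γ) r)⁻¹ * (og (Γ := Γ) r)⁻¹ := by
  by_cases hv : v = r
  · subst hv; rw [Aw_root, map_one]; group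
  · rw [Aw_ne ht r hv, map_mul, fOne_Aw (pa ht r v), fOne_gen ht r hv]
    have hcomm := og_comm (pa_adj ht hv)
    calc og r * (og (pa ht r v))⁻¹ * og v * (og (Γ := Γ) r)⁻¹ *
          (og r * og (pa ht r v) * (og (Γ := Γ) r)⁻¹ * (og (Γ := Γ) r)⁻¹)
        = og r * (og (pa ht r v))⁻¹ * (og v * og (pa ht r v)) * (og (Γ := Γ) r)⁻¹ * (og (Γ := Γ) r)⁻¹ := by
          group
      _ = og r * (og (pa ht r v))⁻¹ * (og (pa ht r v) * og v) * (og (Γ := Γ) r)⁻¹ * (og (Γ := Γ) r)⁻¹ := by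
          rw [← hcomm]
      _ = og r * og v * (og (Γ := Γ) r)⁻¹ * (og (Γ := Γ) r)⁻¹ := by group
  termination_by dep ht r v
  decreasing_by exact dep_pa_lt ht hv

lemma key_conj : ∀ g : FreeGroup {w : V // w ≠ r},
    fOne ht r (aEnd ht r g) = og (Γ := Γ) r * fOne ht r g * (og (Γ := Γ) r)⁻¹ := by
  have : (fOne ht r).comp (aEnd ht r) =
      (MulAut.conj (og (Γ := Γ) r)).toMonoidHom.comp (fOne ht r) := by
    refine FreeGroup.ext_hom _ _ fun v' => ?_
    obtain ⟨v, hv⟩ := v'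
    show fOne ht r (aEnd ht r (gen v hv)) = MulAut.conj (og (Γ := Γ) r) (fOne ht r (gen v hv))
    rw [aEnd_gen ht r hv, map_mul, map_mul, map_inv, fOne_Aw, fOne_gen ht r hv]
    simp only [MulAut.conj_apply]
    have hcomm := og_comm (pa_adj ht hv)
    calc (og r * og (pa ht r v) * (og (Γ := Γ) r)⁻¹ * (og (Γ := Γ) r)⁻¹)⁻¹ *
          (og r * (og (pa ht r v))⁻¹ * og v * (og (Γ := Γ) r)⁻¹) *
          (og r * og (pa ht r v) * (og (Γ := Γ) r)⁻¹ * (og (Γ := Γ) r)⁻¹)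
        = og (Γ := Γ) r * og (Γ := Γ) r * (og (pa ht r v))⁻¹ * ((og (pa ht r v))⁻¹ * (og v * og (pa ht r v)))
            * (og (Γ := Γ) r)⁻¹ * (og (Γ := Γ) r)⁻¹ := by group; try rw [zpow_two]
      _ = og (Γ := Γ) r * og (Γ := Γ) r * (og (pa ht r v))⁻¹ * ((og (pa ht r v))⁻¹ * (og (pa ht r v) * og v))
            * (og (Γ := Γ) r)⁻¹ * (og (Γ := Γ) r)⁻¹ := by rw [← hcomm]
      _ = og (Γ := Γ) r * (og r * (og (pa ht r v))⁻¹ * og v * (og (Γ := Γ) r)⁻¹) *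
            (og (Γ := Γ) r)⁻¹ := by group; try rw [zpow_two]
  intro g
  exact DFunLike.congr_fun this g

lemma key_conj_inv (g : FreeGroup {w : V // w ≠ r}) :
    fOne ht r (bEnd ht r g) = (og (Γ := Γ) r)⁻¹ * fOne ht r g * og (Γ := Γ) r := by
  have := key_conj ht r (bEnd ht r g)
  rw [aEnd_bEnd_apply] at this
  rw [this]; group

/-- the map `Multiplicative ℤ → raag Γ` -/
noncomputable def fTwo : Multiplicative ℤ →* raag Γ := zpowersHom _ (og (Γ := Γ) r)

lemma fTwo_apply (m : ℤ) : fTwo (Γ := Γ) r (Multiplicative.ofAdd m) = og (Γ := Γ) r ^ m := rfl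

lemma alpha_pow_apply (m : ℤ) : ∀ g : FreeGroup {w : V // w ≠ r},
    fOne ht r ((alpha ht r ^ m) g) =
      og (Γ := Γ) r ^ m * fOne ht r g * (og (Γ := Γ) r ^ m)⁻¹ := by
  induction m using Int.induction_on with
  | zero => intro g; simp
  | succ k ih =>
      intro g
      have h1 : (alpha ht r ^ ((k : ℤ) + 1)) g = (alpha ht r ^ (k : ℤ)) (aEnd ht r g) := by
        rw [zpow_add, zpow_one]
        rfl
      rw [h1, ih (aEnd ht r g), key_conj ht r g, zpow_add, zpow_one]
      group
  | pred k ih =>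
      intro g
      have h1 : (alpha ht r ^ (-(k : ℤ) - 1)) g = (alpha ht r ^ (-(k : ℤ))) (bEnd ht r g) := by
        rw [zpow_sub, zpow_one]
        rfl
      rw [h1, ih (bEnd ht r g), key_conj_inv ht r g, zpow_sub, zpow_one]
      group

lemma compat : ∀ z : Multiplicative ℤ,
    (fOne ht r).comp ((phi ht r z)).toMonoidHom =
      (MulAut.conj (fTwo (Γ := Γ) r z)).toMonoidHom.comp (fOne ht r) := by
  intro z
  refine MonoidHom.ext fun g => ?_
  show fOne ht r (phi ht r z g) = fTwo (Γ := Γ) r z * fOne ht r g * (fTwo (Γ := Γ) r z)⁻¹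
  have h1 : phi ht r z g = (alpha ht r ^ (Multiplicative.toAdd z)) g := rfl
  have h2 : fTwo (Γ := Γ) r z = og (Γ := Γ) r ^ (Multiplicative.toAdd z) := rfl
  rw [h1, h2, alpha_pow_apply ht r _ g]

/-- the map `Gp → raag Γ` -/
noncomputable def Psi : Gp ht r →* raag Γ :=
  SemidirectProduct.lift (fOne ht r) (fTwo (Γ := Γ) r) (compat ht r)

lemma Psi_inl (g : FreeGroup {w : V // w ≠ r}) :
    Psi ht r (SemidirectProduct.inl g) = fOne ht r g := by
  rw [Psi, SemidirectProduct.lift_inl]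

lemma Psi_inr (z : Multiplicative ℤ) :
    Psi ht r (SemidirectProduct.inr z) = fTwo (Γ := Γ) r z := by
  rw [Psi, SemidirectProduct.lift_inr]

lemma Psi_Theta : (Psi ht r).comp (Theta ht r) = MonoidHom.id (raag Γ) := by
  refine PresentedGroup.ext fun v => ?_
  show Psi ht r (Theta ht r (PresentedGroup.of v)) = PresentedGroup.of v
  rw [Theta_of]
  have h1 : ThetaF ht r v = SemidirectProduct.inl (Cw ht r v) * SemidirectProduct.inr tt :=
    (SemidirectProduct.inl_left_mul_inr_right _).symm
  rw [h1, map_mul, Psi_inl, Psi_inr, fOne_Cw]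
  show og v * (og (Γ := Γ) r)⁻¹ * og (Γ := Γ) r ^ (1 : ℤ) = og v
  group

lemma Theta_Psi : (Theta ht r).comp (Psi ht r) = MonoidHom.id (Gp ht r) := by
  refine SemidirectProduct.hom_ext ?_ ?_
  · refine FreeGroup.ext_hom _ _ fun v' => ?_
    obtain ⟨v, hv⟩ := v'
    show Theta ht r (Psi ht r (SemidirectProduct.inl (gen v hv))) =
      SemidirectProduct.inl (gen v hv)
    rw [Psi_inl, fOne_gen ht r hv]
    simp only [map_mul, map_inv]
    rw [show (og (Γ := Γ) r : raag Γ) = PresentedGroup.of r from rfl,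
      show (og (pa ht r v) : raag Γ) = PresentedGroup.of (pa ht r v) from rfl,
      show (og v : raag Γ) = PresentedGroup.of v from rfl, Theta_of, Theta_of, Theta_of]
    have s1 : ThetaF ht r r * (ThetaF ht r (pa ht r v))⁻¹ =
        (⟨(Cw ht r (pa ht r v))⁻¹, 1⟩ : Gp ht r) := by
      rw [ThetaF, ThetaF, Cw_root, mk_inv, mk_mul]
      congr 1
      · rw [one_mul]
        have : phi ht r tt (phi ht r tt⁻¹ (Cw ht r (pa ht r v))⁻¹) = (Cw ht r (pa ht r v))⁻¹ := by
          rw [phi_t_inv, phi_t, aEnd_bEnd_apply]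
        exact this
    have s2 : (⟨(Cw ht r (pa ht r v))⁻¹, 1⟩ : Gp ht r) * ThetaF ht r v =
        (⟨gen v hv, tt⟩ : Gp ht r) := by
      rw [ThetaF, mk_mul]
      congr 1
      · rw [map_one]
        show (Cw ht r (pa ht r v))⁻¹ * Cw ht r v = gen v hv
        rw [Cw_ne ht r hv]
        group
    have s3 : (⟨gen v hv, tt⟩ : Gp ht r) * (ThetaF ht r r)⁻¹ =
        SemidirectProduct.inl (gen v hv) := by
      rw [ThetaF, Cw_root, mk_inv, mk_mul]
      have h1 : phi ht r tt⁻¹ (1 : FreeGroup {w : V // w ≠ r})⁻¹ = 1 := by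
        rw [inv_one, map_one]
      rw [h1, map_one, mul_one, mul_inv_cancel]
      rfl
    rw [mul_assoc (ThetaF ht r r), ← mul_assoc (ThetaF ht r r), s1, s2, s3]
  · refine MonoidHom.ext_mint ?_
    show Theta ht r (Psi ht r (SemidirectProduct.inr tt)) = SemidirectProduct.inr tt
    rw [Psi_inr]
    show Theta ht r (og (Γ := Γ) r ^ (1:ℤ)) = SemidirectProduct.inr tt
    rw [zpow_one]
    rw [show og (Γ := Γ) r = PresentedGroup.of r from rfl, Theta_of, ThetaF, Cw_root]
    rfl

/-- the isomorphism `raag Γ ≃* Gp` -/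
noncomputable def Ebig : raag Γ ≃* Gp ht r :=
  MonoidHom.toMulEquiv (Theta ht r) (Psi ht r) (Psi_Theta ht r) (Theta_Psi ht r)

lemma nu_eq : raagNu Γ = (SemidirectProduct.rightHom).comp (Theta ht r) := by
  refine PresentedGroup.ext fun v => ?_
  show raagNu Γ (PresentedGroup.of v) = SemidirectProduct.rightHom (Theta ht r (PresentedGroup.of v))
  rw [Theta_of]
  rfl

lemma bb_eq_comap : BB Γ = Subgroup.comap (Theta ht r)
    (SemidirectProduct.rightHom (φ := phi ht r)).ker := by
  rw [BB, nu_eq ht r, MonoidHom.comap_ker]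

lemma map_bb : (BB Γ).map ((Ebig ht r : raag Γ ≃* Gp ht r) : raag Γ →* Gp ht r) =
    (SemidirectProduct.rightHom (φ := phi ht r)).ker := by
  have hco : ((Ebig ht r : raag Γ ≃* Gp ht r) : raag Γ →* Gp ht r) = Theta ht r := rfl
  rw [hco, bb_eq_comap ht r,
    Subgroup.map_comap_eq_self_of_surjective (Ebig ht r).surjective]

/-- the Bestvina–Brady group is isomorphic to the free group on the non-root vertices -/
noncomputable def bbEquiv : ↥(BB Γ) ≃* FreeGroup {w : V // w ≠ r} :=
  ((MulEquiv.subgroupMap (Ebig ht r) (BB Γ)).trans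
    (MulEquiv.subgroupCongr (map_bb ht r))).trans
    (((MonoidHom.ofInjective (SemidirectProduct.inl_injective (φ := phi ht r))).trans
      (MulEquiv.subgroupCongr SemidirectProduct.range_inl_eq_ker_rightHom)).symm)

end Words
end BBFree

/-- if `Γ` is a tree on `n ≥ 1` vertices, then the Bestvina–Brady group
`N_Γ` is the free group of rank `n - 1`. -/
theorem bb_of_tree_is_free (n : ℕ) (hn : 1 ≤ n) (Γ : SimpleGraph (Fin n))
    (hΓ : Γ.IsTree) : Nonempty (↥(BB Γ) ≃* FreeGroup (Fin (n - 1))) := by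
  have r : Fin n := ⟨0, hn⟩
  have hcard : Fintype.card {w : Fin n // w ≠ r} = n - 1 := by
    have h1 : Fintype.card {w : Fin n // w ≠ r} = Fintype.card (Fin n) - 1 := by
      rw [← Fintype.card_subtype_eq r]
      exact Fintype.card_subtype_compl _
    simp only [Fintype.card_fin] at h1
    exact h1
  have e : {w : Fin n // w ≠ r} ≃ Fin (n - 1) := Fintype.equivFinOfCardEq hcard
  exact ⟨(BBFree.bbEquiv hΓ r).trans (FreeGroup.freeGroupCongr e)⟩
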